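/- Let Y = D ∪ L ⊆ ℝ², where D = {(x,y) ∈ ℝ² : 9|y| ≤ 1/4 − |x|} and L = ([−π/2, −1/4] ∪ [1/4, π/2]) × {0}. Let 𝔫 be the measure on ℝ² that equals cos²(x) times one-dimensional Hausdorff measure restricted to L plus the measure with density (x,y) ↦ 9·cos²(x)/(2(1/4 − |x|)) with respect to two-dimensional Lebesgue measure restricted to D. Then the pushforward of 𝔫 under the first-coordinate projection (x,y) ↦ x is the measure on ℝ with density x ↦ cos²(x) with respect to Lebesgue measure restricted to the interval [−π/2, π/2]. -/

import Mathlib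

/-
The projection of `𝔫` splits into its two pieces. The segment `L` is an isometric copy of
`[-π/2, -1/4] ∪ [1/4, π/2]`, on which `μH[1]` is Lebesgue measure, so its piece projects to
`cos²x dx` there. For the triangle `D`, Tonelli integrates the density over each vertical slice:
for `|x| < 1/4` the slice has length `2(1/4 - |x|)/9`, exactly cancelling the denominator, and
for `|x| ≥ 1/4` it has length zero, so this piece projects to `cos²x dx` on `(-1/4, 1/4)`. The two
intervals tile `[-π/2, π/2]`.
-/

open MeasureTheory Set Real

noncomputable section

/-- The set `D = {(x,y) : 9|y| ≤ 1/4 - |x|}`. -/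
def setD : Set (ℝ × ℝ) := {p | 9 * |p.2| ≤ 1 / 4 - |p.1|}

/-- The set `L = ([-π/2,-1/4] ∪ [1/4,π/2]) × {0}`. -/
def lineLY : Set (ℝ × ℝ) :=
  (Set.Icc (-(π / 2)) (-(1 / 4 : ℝ)) ∪ Set.Icc (1 / 4 : ℝ) (π / 2)) ×ˢ ({0} : Set ℝ)

/-- The reference measure `𝔫`. -/
def measN : Measure (ℝ × ℝ) :=
  ((μH[1]).restrict lineLY).withDensity (fun p => ENNReal.ofReal (Real.cos p.1 ^ 2)) +
    ((volume : Measure (ℝ × ℝ)).restrict setD).withDensity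
      (fun p => ENNReal.ofReal (9 * Real.cos p.1 ^ 2 / (2 * (1 / 4 - |p.1|))))

theorem isometry_prodMk_const {X Y : Type*} [PseudoEMetricSpace X] [PseudoEMetricSpace Y]
    (c : Y) : Isometry fun x : X => (x, c) :=
  fun x y => by simp [Prod.edist_eq]

namespace MeasureTheory.Measure

variable {α β : Type*} [MeasurableSpace α] [MeasurableSpace β]

theorem map_withDensity_comp (μ : Measure α) {g : α → β} (hg : Measurable g)
    {f : β → ENNReal} (hf : Measurable f) :
    (μ.map g).withDensity f = (μ.withDensity fun a => f (g a)).map g := by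
  ext s hs
  rw [withDensity_apply _ hs, map_apply hg hs, withDensity_apply _ (hg hs),
    setLIntegral_map hs hf hg]

theorem map_fst_withDensity_prod (μ : Measure α) [SFinite μ] (ν : Measure β) [SFinite ν]
    {f : α × β → ENNReal} (hf : Measurable f) :
    ((μ.prod ν).withDensity f).map Prod.fst = μ.withDensity fun x => ∫⁻ y, f (x, y) ∂ν := by
  ext s hs
  rw [map_apply measurable_fst hs, withDensity_apply _ (measurable_fst hs),
    withDensity_apply _ hs, ← prod_univ, setLIntegral_prod _ hf.aemeasurable]
  simp only [restrict_univ]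

theorem restrict_Icc_union_Icc_add_restrict_Ioo [LinearOrder α] [TopologicalSpace α]
    [OrderTopology α] [OpensMeasurableSpace α] (μ : Measure α) {a b c d : α}
    (hab : a ≤ b) (hbc : b < c) (hcd : c ≤ d) :
    μ.restrict (Icc a b ∪ Icc c d) + μ.restrict (Ioo b c) = μ.restrict (Icc a d) := by
  have hdisj : Disjoint (Icc a b ∪ Icc c d) (Ioo b c) :=
    disjoint_union_left.2 ⟨disjoint_left.2 fun _ h h' => h'.1.not_ge h.2,
      disjoint_left.2 fun _ h h' => h'.2.not_ge h.1⟩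
  rw [← restrict_union hdisj measurableSet_Ioo, union_right_comm, Icc_union_Ioo_eq_Ico hab hbc,
    Ico_union_Icc_eq_Icc (hab.trans hbc.le) hcd]

end MeasureTheory.Measure

theorem Isometry.hausdorffMeasure_restrict_image {X Y : Type*} [EMetricSpace X]
    [EMetricSpace Y] [MeasurableSpace X] [BorelSpace X] [MeasurableSpace Y] [BorelSpace Y]
    {f : X → Y} (hf : Isometry f) {d : ℝ} (hd : 0 ≤ d) (s : Set X) :
    (μH[d] : Measure Y).restrict (f '' s) = (μH[d].restrict s).map f := by
  ext A hA
  rw [Measure.map_apply hf.continuous.measurable hA, Measure.restrict_apply hA,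
    Measure.restrict_apply (hf.continuous.measurable hA), ← image_preimage_inter,
    hf.hausdorffMeasure_image (Or.inl hd)]

theorem map_fst_withDensity_hausdorffMeasure_restrict_prod_singleton {X Y : Type*}
    [EMetricSpace X] [EMetricSpace Y] [MeasurableSpace X] [BorelSpace X] [MeasurableSpace Y]
    [BorelSpace Y] [SecondCountableTopologyEither X Y] {d : ℝ} (hd : 0 ≤ d) (s : Set X) (c : Y)
    {f : X → ENNReal} (hf : Measurable f) :
    (((μH[d] : Measure (X × Y)).restrict (s ×ˢ {c})).withDensity fun p => f p.1).map
      Prod.fst = (μH[d].restrict s).withDensity f := by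
  rw [prod_singleton, (isometry_prodMk_const c).hausdorffMeasure_restrict_image hd,
    Measure.map_withDensity_comp _ measurable_prodMk_right (by fun_prop),
    Measure.map_map measurable_fst measurable_prodMk_right]
  exact Measure.map_id

theorem Real.volume_setOf_mul_abs_le {a : ℝ} (ha : 0 < a) (t : ℝ) :
    volume {y : ℝ | a * |y| ≤ t} = ENNReal.ofReal (2 * t / a) := by
  have hIcc : {y : ℝ | a * |y| ≤ t} = Icc (-(t / a)) (t / a) := by
    ext y
    rw [mem_ofPred_eq, mem_Icc, ← abs_le, le_div_iff₀ ha, mul_comm]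
  rw [hIcc, Real.volume_Icc]
  ring_nf

theorem measurableSet_setD : MeasurableSet setD :=
  measurableSet_le (by fun_prop) (by fun_prop)

theorem lintegral_indicator_setD_slice (x : ℝ) :
    ∫⁻ y, setD.indicator
        (fun p => ENNReal.ofReal (9 * Real.cos p.1 ^ 2 / (2 * (1 / 4 - |p.1|)))) (x, y) =
      (Ioo (-(1 / 4)) (1 / 4)).indicator (fun x => ENNReal.ofReal (Real.cos x ^ 2)) x := by
  change ∫⁻ y, {y : ℝ | 9 * |y| ≤ 1 / 4 - |x|}.indicator
    (fun _ => ENNReal.ofReal (9 * Real.cos x ^ 2 / (2 * (1 / 4 - |x|)))) y = _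
  rw [lintegral_indicator_const (measurableSet_le (by fun_prop) (by fun_prop)),
    Real.volume_setOf_mul_abs_le (by norm_num)]
  by_cases hx : |x| < 1 / 4
  · have hpos : 0 < 1 / 4 - |x| := by linarith
    rw [indicator_of_mem (show x ∈ Ioo _ _ from abs_lt.mp hx),
      ← ENNReal.ofReal_mul (by positivity)]
    congr 1
    field_simp
    exact mul_div_cancel_right₀ _ (by linarith)
  · rw [indicator_of_notMem (show x ∉ Ioo _ _ from fun h => hx (abs_lt.mpr h)),
      ENNReal.ofReal_of_nonpos (show 2 * (1 / 4 - |x|) / 9 ≤ 0 by linarith), mul_zero]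

theorem map_fst_withDensity_restrict_setD :
    (((volume : Measure (ℝ × ℝ)).restrict setD).withDensity
        fun p => ENNReal.ofReal (9 * Real.cos p.1 ^ 2 / (2 * (1 / 4 - |p.1|)))).map Prod.fst =
      ((volume : Measure ℝ).restrict (Ioo (-(1 / 4)) (1 / 4))).withDensity
        fun x => ENNReal.ofReal (Real.cos x ^ 2) := by
  rw [← withDensity_indicator measurableSet_setD, Measure.volume_eq_prod,
    Measure.map_fst_withDensity_prod _ _ (by fun_prop (disch := exact measurableSet_setD)),
    funext lintegral_indicator_setD_slice, withDensity_indicator measurableSet_Ioo]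

theorem measN_proj_eq_cos_sq :
    Measure.map Prod.fst measN =
      ((volume : Measure ℝ).restrict (Set.Icc (-(π / 2)) (π / 2))).withDensity
        (fun x => ENNReal.ofReal (Real.cos x ^ 2)) := by
  have hpi : (1 / 4 : ℝ) < π / 2 := by linarith [pi_gt_three]
  rw [measN, Measure.map_add _ _ measurable_fst, lineLY,
    map_fst_withDensity_hausdorffMeasure_restrict_prod_singleton zero_le_one _ _
      (f := fun x => ENNReal.ofReal (Real.cos x ^ 2)) (by fun_prop),
    hausdorffMeasure_real, map_fst_withDensity_restrict_setD, ← withDensity_add_measure,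
    Measure.restrict_Icc_union_Icc_add_restrict_Ioo _ (by linarith) (by norm_num) hpi.le]

end
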